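/- (Recurrence of Berg–Vignat) Let n, m ≥ 1 be natural numbers and a a real number. Then β_0^{(n,m)}(a) = 0, and for every k with 0 ≤ k ≤ n+m−1, (1/(2k+1)) · β_{k+1}^{(n,m)}(a) = (a²/(2n−1)) · β_k^{(n−1,m)}(a) + ((1−a)²/(2m−1)) · β_k^{(n,m−1)}(a). -/

import Mathlib

open Finset

/-- The Bessel polynomial `q_n`, normalized so that `q_n(0) = 1`. -/
noncomputable def besselQ (n : ℕ) (u : ℝ) : ℝ :=
  ∑ k ∈ Finset.range (n + 1),
    ((n.factorial : ℝ) * (2 * n - k).factorial * 2 ^ k) /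
      ((2 * n).factorial * (n - k).factorial * k.factorial) * u ^ k

/-- The Pochhammer symbol `(x)_j = x (x+1) ⋯ (x+j-1)`. -/
noncomputable def poch (x : ℝ) (j : ℕ) : ℝ := ∏ i ∈ Finset.range j, (x + i)

/-- Generalized binomial coefficient with integer (possibly negative) upper entry. -/
noncomputable def gbinom (z : ℤ) (j : ℕ) : ℝ :=
  (∏ i ∈ Finset.range j, ((z : ℝ) - i)) / j.factorial

/-!
Apply `1 - d/du` to both sides of the linearization identity. Comparing coefficients shows
`q_{n+1} - q_{n+1}' = u q_n / (2n+1)`, so on the right `1 - d/du` turns `∑ β_k q_k` into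
`β_0 + u ∑ β_{k+1} q_k / (2k+1)`. On the left, because `a + (1 - a) = 1`, the Leibniz rule splits
`(1 - d/du) (q_n(au) q_m((1-a)u))` into `(a - d/du) q_n(au) · q_m((1-a)u)` plus
`q_n(au) · ((1-a) - d/du) q_m((1-a)u)`, and these are `a² u q_{n-1}(au) q_m((1-a)u) / (2n-1)` and
`(1-a)² u q_n(au) q_{m-1}((1-a)u) / (2m-1)`. The constant terms give `β_0 = 0`; after cancelling
`u`, the recurrence follows because `deg q_k = k` makes the `q_k` linearly independent.
-/

open Polynomial Nat

noncomputable def besselCoeff (n k : ℕ) : ℝ :=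
  (n ! * (2 * n - k)! * 2 ^ k : ℝ) / ((2 * n)! * (n - k)! * k !)

lemma succ_mul_besselCoeff_succ_succ {n k : ℕ} (hk : k ≤ n) :
    (k + 1) * besselCoeff (n + 1) (k + 1) = (2 * n + 1 - k) / (2 * n + 1) * besselCoeff n k := by
  obtain ⟨r, rfl⟩ := Nat.exists_eq_add_of_le hk
  have e1 : 2 * (k + r + 1) - (k + 1) = k + 2 * r + 1 := by omega
  have e2 : k + r + 1 - (k + 1) = r := by omega
  have e3 : 2 * (k + r) - k = k + 2 * r := by omega
  have e4 : 2 * (k + r + 1) = 2 * (k + r) + 1 + 1 := by omega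
  rw [besselCoeff, besselCoeff, e1, e2, e3, e4, Nat.add_sub_cancel_left]
  simp only [Nat.factorial_succ]
  push_cast
  field_simp
  ring

lemma succ_mul_besselCoeff_succ {n k : ℕ} (hk : k < n) :
    (k + 1) * (2 * n - k) * besselCoeff n (k + 1) = 2 * (n - k) * besselCoeff n k := by
  obtain ⟨r, rfl⟩ := Nat.exists_eq_add_of_lt hk
  have e1 : 2 * (k + r + 1) - (k + 1) = k + 2 * r + 1 := by omega
  have e2 : k + r + 1 - (k + 1) = r := by omega
  have e3 : 2 * (k + r + 1) - k = k + 2 * r + 1 + 1 := by omega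
  have e4 : k + r + 1 - k = r + 1 := by omega
  rw [besselCoeff, besselCoeff, e1, e2, e3, e4]
  simp only [Nat.factorial_succ]
  push_cast
  field_simp
  ring

noncomputable def besselPoly (n : ℕ) : ℝ[X] :=
  ∑ k ∈ range (n + 1), monomial k (besselCoeff n k)

lemma eval_besselPoly (n : ℕ) (u : ℝ) : (besselPoly n).eval u = besselQ n u := by
  simp [besselPoly, besselQ, besselCoeff, eval_finsetSum]

lemma coeff_besselPoly (n k : ℕ) :
    (besselPoly n).coeff k = if k ≤ n then besselCoeff n k else 0 := by
  simp [besselPoly, coeff_monomial]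

lemma coeff_besselPoly_zero (n : ℕ) : (besselPoly n).coeff 0 = 1 := by
  simp [coeff_besselPoly, besselCoeff, mul_comm, factorial_ne_zero]

lemma degree_besselPoly (n : ℕ) : (besselPoly n).degree = n := by
  refine degree_eq_of_le_of_coeff_ne_zero ((degree_le_iff_coeff_zero _ _).2 fun k hk => ?_) ?_
  · rw [coeff_besselPoly, if_neg (by exact_mod_cast hk.not_ge)]
  · rw [coeff_besselPoly, if_pos le_rfl, besselCoeff]
    positivity

lemma succ_mul_coeff_besselPoly_succ_succ (n k : ℕ) :
    (k + 1) * (besselPoly (n + 1)).coeff (k + 1) =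
      (2 * n + 1 - k) / (2 * n + 1) * (besselPoly n).coeff k := by
  by_cases hk : k ≤ n
  · simp only [coeff_besselPoly, if_pos hk, if_pos (Nat.succ_le_succ hk)]
    exact succ_mul_besselCoeff_succ_succ hk
  · simp [coeff_besselPoly, hk]

lemma succ_mul_coeff_besselPoly_succ (n k : ℕ) :
    (k + 1) * (2 * n - k) * (besselPoly n).coeff (k + 1) =
      2 * (n - k) * (besselPoly n).coeff k := by
  rcases lt_trichotomy k n with hk | rfl | hk
  · simp only [coeff_besselPoly, if_pos hk.le, if_pos (succ_le_of_lt hk)]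
    exact succ_mul_besselCoeff_succ hk
  · simp [coeff_besselPoly]
  · simp [coeff_besselPoly, hk.not_ge, (hk.trans (lt_succ_self k)).not_ge]

lemma besselPoly_zero : besselPoly 0 = 1 := by
  simp [besselPoly, besselCoeff]

lemma besselPoly_succ_sub_derivative (n : ℕ) :
    besselPoly (n + 1) - derivative (besselPoly (n + 1)) =
      C (2 * (n : ℝ) + 1)⁻¹ * (X * besselPoly n) := by
  have hn : (2 * n + 1 : ℝ) ≠ 0 := by positivity
  ext (_ | j)
  · have h := succ_mul_coeff_besselPoly_succ_succ n 0
    simp only [CharP.cast_eq_zero, zero_add, one_mul, sub_zero, div_self hn,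
      coeff_besselPoly_zero] at h
    simp [coeff_derivative, coeff_besselPoly_zero, h]
  · have h1 := succ_mul_coeff_besselPoly_succ_succ n j
    have h2 := succ_mul_coeff_besselPoly_succ_succ n (j + 1)
    have h3 := succ_mul_coeff_besselPoly_succ n j
    have hj : (j + 1 : ℝ) ≠ 0 := by positivity
    simp only [coeff_sub, coeff_derivative, coeff_C_mul, coeff_X_mul]
    push_cast at h2 ⊢
    apply mul_left_cancel₀ hj
    linear_combination h1 - (j + 1) * h2 - h3 / (2 * n + 1)

lemma C_mul_comp_sub_derivative_comp {R : Type*} [CommRing R] (p : R[X]) (c : R) :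
    C c * p.comp (C c * X) - derivative (p.comp (C c * X)) =
      C c * (p - derivative p).comp (C c * X) := by
  simp only [derivative_comp, derivative_C_mul_X, sub_comp]
  ring

lemma C_mul_besselPoly_comp_sub_derivative (n : ℕ) (c : ℝ) :
    C c * (besselPoly (n + 1)).comp (C c * X) - derivative ((besselPoly (n + 1)).comp (C c * X)) =
      C (c ^ 2 / (2 * n + 1)) * (X * (besselPoly n).comp (C c * X)) := by
  rw [C_mul_comp_sub_derivative_comp, besselPoly_succ_sub_derivative]
  simp only [mul_comp, C_comp, X_comp, div_eq_mul_inv, C_mul, C_pow]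
  ring

lemma mul_sub_derivative_mul {R : Type*} [CommRing R] {a b : R} (hab : a + b = 1) (A B : R[X]) :
    A * B - derivative (A * B) =
      (C a * A - derivative A) * B + A * (C b * B - derivative B) := by
  have h : C a + C b = (1 : R[X]) := by rw [← C_add, hab, C_1]
  rw [derivative_mul]
  linear_combination (-(A * B)) * h

lemma sum_besselPoly_sub_derivative (N : ℕ) (β : ℕ → ℝ) :
    ∑ k ∈ range (N + 1), C (β k) * besselPoly k -
        derivative (∑ k ∈ range (N + 1), C (β k) * besselPoly k) =
      C (β 0) + X * ∑ j ∈ range N, C (β (j + 1) / (2 * j + 1)) * besselPoly j := by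
  rw [derivative_sum, ← sum_sub_distrib, sum_range_succ', mul_sum, add_comm]
  congr 1
  · simp [besselPoly_zero]
  · refine sum_congr rfl fun j _ => ?_
    rw [derivative_C_mul, ← mul_sub, besselPoly_succ_sub_derivative, div_eq_mul_inv, C_mul]
    ring

lemma linearIndependent_besselPoly : LinearIndependent ℝ besselPoly :=
  (⟨besselPoly, degree_besselPoly⟩ : Polynomial.Sequence ℝ).linearIndependent

lemma eq_of_sum_C_mul_besselPoly_eq {s : Finset ℕ} {d e : ℕ → ℝ}
    (h : ∑ k ∈ s, C (d k) * besselPoly k = ∑ k ∈ s, C (e k) * besselPoly k) {k : ℕ}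
    (hk : k ∈ s) : d k = e k :=
  sub_eq_zero.1 <| linearIndependent_iff'.1 linearIndependent_besselPoly s (d - e)
    (by simp [sub_smul, sum_sub_distrib, smul_eq_C_mul, h]) k hk

lemma besselPoly_comp_mul_comp_eq_sum {n m N : ℕ} {a b : ℝ} {β : ℕ → ℝ}
    (h : ∀ u, besselQ n (a * u) * besselQ m (b * u) = ∑ k ∈ range N, β k * besselQ k u) :
    (besselPoly n).comp (C a * X) * (besselPoly m).comp (C b * X) =
      ∑ k ∈ range N, C (β k) * besselPoly k :=
  Polynomial.funext fun u => by simpa [eval_besselPoly, eval_finsetSum] using h u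

theorem besselPoly_linearization_recurrence {n m : ℕ} {a : ℝ} {β βn βm : ℕ → ℝ}
    (hβ : (besselPoly (n + 1)).comp (C a * X) * (besselPoly (m + 1)).comp (C (1 - a) * X) =
      ∑ k ∈ range (n + m + 3), C (β k) * besselPoly k)
    (hβn : (besselPoly n).comp (C a * X) * (besselPoly (m + 1)).comp (C (1 - a) * X) =
      ∑ k ∈ range (n + m + 2), C (βn k) * besselPoly k)
    (hβm : (besselPoly (n + 1)).comp (C a * X) * (besselPoly m).comp (C (1 - a) * X) =
      ∑ k ∈ range (n + m + 2), C (βm k) * besselPoly k) :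
    β 0 = 0 ∧ ∀ k < n + m + 2,
      β (k + 1) / (2 * k + 1) =
        a ^ 2 / (2 * n + 1) * βn k + (1 - a) ^ 2 / (2 * m + 1) * βm k := by
  have hsub : C (β 0) + X * ∑ j ∈ range (n + m + 2), C (β (j + 1) / (2 * j + 1)) * besselPoly j =
      X * ∑ j ∈ range (n + m + 2),
        C (a ^ 2 / (2 * n + 1) * βn j + (1 - a) ^ 2 / (2 * m + 1) * βm j) * besselPoly j := by
    rw [← sum_besselPoly_sub_derivative, ← hβ, mul_sub_derivative_mul (add_sub_cancel a 1),
      C_mul_besselPoly_comp_sub_derivative, C_mul_besselPoly_comp_sub_derivative]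
    simp only [C_add, C_mul, add_mul, sum_add_distrib, mul_assoc, ← mul_sum, ← hβn, ← hβm]
    ring
  have hβ0 : β 0 = 0 := by simpa using congrArg (coeff · 0) hsub
  rw [hβ0, C_0, zero_add] at hsub
  exact ⟨hβ0, fun k hk => eq_of_sum_C_mul_besselPoly_eq (mul_left_cancel₀ X_ne_zero hsub)
    (mem_range.2 hk)⟩

theorem bessel_linearization_recurrence
    (n m : ℕ) (hn : 1 ≤ n) (hm : 1 ≤ m) (a : ℝ)
    (β βn βm : ℕ → ℝ)
    (hβ : ∀ u : ℝ, besselQ n (a * u) * besselQ m ((1 - a) * u) =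
      ∑ k ∈ Finset.range (n + m + 1), β k * besselQ k u)
    (hβn : ∀ u : ℝ, besselQ (n - 1) (a * u) * besselQ m ((1 - a) * u) =
      ∑ k ∈ Finset.range ((n - 1) + m + 1), βn k * besselQ k u)
    (hβm : ∀ u : ℝ, besselQ n (a * u) * besselQ (m - 1) ((1 - a) * u) =
      ∑ k ∈ Finset.range (n + (m - 1) + 1), βm k * besselQ k u) :
    β 0 = 0 ∧
    ∀ k : ℕ, k ≤ n + m - 1 →
      (1 / (2 * (k : ℝ) + 1)) * β (k + 1) =
        (a ^ 2 / (2 * (n : ℝ) - 1)) * βn k + ((1 - a) ^ 2 / (2 * (m : ℝ) - 1)) * βm k := by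
  obtain ⟨n, rfl⟩ : ∃ n', n = n' + 1 := ⟨n - 1, by omega⟩
  obtain ⟨m, rfl⟩ : ∃ m', m = m' + 1 := ⟨m - 1, by omega⟩
  simp only [Nat.add_sub_cancel, show n + 1 + (m + 1) + 1 = n + m + 3 by omega,
    show n + (m + 1) + 1 = n + m + 2 by omega, show n + 1 + m + 1 = n + m + 2 by omega] at hβ hβn hβm
  obtain ⟨hβ0, hrec⟩ := besselPoly_linearization_recurrence (besselPoly_comp_mul_comp_eq_sum hβ)
    (besselPoly_comp_mul_comp_eq_sum hβn) (besselPoly_comp_mul_comp_eq_sum hβm)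
  refine ⟨hβ0, fun k hk => ?_⟩
  convert hrec k (by omega) using 2 <;> push_cast <;> ring
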